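/- If G, H, J are three undetermined three-player impartial games, then every option of G+H+J is undetermined. -/
import Mathlib


inductive IGame : Type where
  | mk : List IGame → IGame

namespace IGame

def opts : IGame → List IGame
  | mk l => l

theorem sizeOf_lt_of_mem {g G : IGame} (h : g ∈ G.opts) : sizeOf g < sizeOf G := by
  cases G with
  | mk l =>
    have h2 : g ∈ l := h
    have := List.sizeOf_lt_of_mem h2
    simp only [mk.sizeOf_spec]
    omega

def add : IGame → IGame → IGame
  | G, H =>
    mk ((G.opts.attach.map fun g => add g.1 H) ++ (H.opts.attach.map fun h => add G h.1))
termination_by G H => sizeOf G + sizeOf H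
decreasing_by
  · have := sizeOf_lt_of_mem g.2; omega
  · have := sizeOf_lt_of_mem h.2; omega

inductive Player : Type where
  | N | O | P
  deriving DecidableEq

def out : IGame → Player → Prop
  | G, .N => ∃ g : {x // x ∈ G.opts}, out g.1 .P
  | G, .O => ∀ g : {x // x ∈ G.opts}, out g.1 .N
  | G, .P => ∀ g : {x // x ∈ G.opts}, out g.1 .O
termination_by G _ => sizeOf G
decreasing_by
  all_goals exact sizeOf_lt_of_mem g.2

theorem out_N {G : IGame} : out G .N ↔ ∃ g ∈ G.opts, out g .P := by
  rw [out]
  exact ⟨fun ⟨g, h⟩ => ⟨g.1, g.2, h⟩, fun ⟨g, hm, h⟩ => ⟨⟨g, hm⟩, h⟩⟩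

theorem out_O {G : IGame} : out G .O ↔ ∀ g ∈ G.opts, out g .N := by
  rw [out]
  exact ⟨fun h g hm => h ⟨g, hm⟩, fun h g => h g.1 g.2⟩

theorem out_P {G : IGame} : out G .P ↔ ∀ g ∈ G.opts, out g .O := by
  rw [out]
  exact ⟨fun h g hm => h ⟨g, hm⟩, fun h g => h g.1 g.2⟩

def outcome (G : IGame) : Set Player := {p | out G p}

def nim : Nat → IGame
  | 0 => mk []
  | n+1 => mk ((nim n).opts ++ [nim n])

end IGame
open IGame

namespace Aux

theorem opts_add (A B : IGame) : (IGame.add A B).opts =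
    (A.opts.attach.map fun a => IGame.add a.1 B) ++ (B.opts.attach.map fun b => IGame.add A b.1) := by
  rw [IGame.add, IGame.opts]

theorem mem_opts_add {K A B : IGame} : K ∈ (IGame.add A B).opts ↔
    (∃ a ∈ A.opts, K = IGame.add a B) ∨ (∃ b ∈ B.opts, K = IGame.add A b) := by
  rw [opts_add]
  simp only [List.mem_append, List.mem_map, List.mem_attach, true_and, Subtype.exists]
  constructor
  · rintro (⟨a, ha, rfl⟩ | ⟨b, hb, rfl⟩)
    · exact Or.inl ⟨a, ha, rfl⟩
    · exact Or.inr ⟨b, hb, rfl⟩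
  · rintro (⟨a, ha, rfl⟩ | ⟨b, hb, rfl⟩)
    · exact Or.inl ⟨a, ha, rfl⟩
    · exact Or.inr ⟨b, hb, rfl⟩

theorem mem_addL {a A B : IGame} (h : a ∈ A.opts) : IGame.add a B ∈ (IGame.add A B).opts :=
  mem_opts_add.mpr (Or.inl ⟨a, h, rfl⟩)

theorem mem_addR {b A B : IGame} (h : b ∈ B.opts) : IGame.add A b ∈ (IGame.add A B).opts :=
  mem_opts_add.mpr (Or.inr ⟨b, h, rfl⟩)

/-- commutativity of `out` under `add` -/
theorem out_comm_aux : ∀ n A B, sizeOf A + sizeOf B < n → ∀ p,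
    out (IGame.add A B) p → out (IGame.add B A) p := by
  intro n
  induction n with
  | zero => intro A B h; omega
  | succ n ih =>
    intro A B hn p hp
    cases p with
    | N =>
      rw [out_N] at hp ⊢
      obtain ⟨K, hK, hPK⟩ := hp
      rcases mem_opts_add.mp hK with ⟨a, ha, rfl⟩ | ⟨b, hb, rfl⟩
      · have hsa := sizeOf_lt_of_mem ha
        exact ⟨IGame.add B a, mem_addR ha, ih a B (by omega) _ hPK⟩
      · have hsb := sizeOf_lt_of_mem hb
        exact ⟨IGame.add b A, mem_addL hb, ih A b (by omega) _ hPK⟩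
    | O =>
      rw [out_O] at hp ⊢
      intro K hK
      rcases mem_opts_add.mp hK with ⟨b, hb, rfl⟩ | ⟨a, ha, rfl⟩
      · have hsb := sizeOf_lt_of_mem hb
        exact ih A b (by omega) _ (hp _ (mem_addR hb))
      · have hsa := sizeOf_lt_of_mem ha
        exact ih a B (by omega) _ (hp _ (mem_addL ha))
    | P =>
      rw [out_P] at hp ⊢
      intro K hK
      rcases mem_opts_add.mp hK with ⟨b, hb, rfl⟩ | ⟨a, ha, rfl⟩
      · have hsb := sizeOf_lt_of_mem hb
        exact ih A b (by omega) _ (hp _ (mem_addR hb))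
      · have hsa := sizeOf_lt_of_mem ha
        exact ih a B (by omega) _ (hp _ (mem_addL ha))

theorem out_comm {A B : IGame} {p : Player} :
    out (IGame.add A B) p ↔ out (IGame.add B A) p :=
  ⟨out_comm_aux (sizeOf A + sizeOf B + 1) A B (by omega) p,
   out_comm_aux (sizeOf B + sizeOf A + 1) B A (by omega) p⟩

/-- swap the 2nd and 3rd summand -/
theorem swap23_aux : ∀ n A B C, sizeOf A + sizeOf B + sizeOf C < n → ∀ p,
    out (IGame.add (IGame.add A B) C) p → out (IGame.add (IGame.add A C) B) p := by
  intro n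
  induction n with
  | zero => intro A B C h; omega
  | succ n ih =>
    intro A B C hn p hp
    have key : ∀ K ∈ (IGame.add (IGame.add A B) C).opts, ∃ K' ∈ (IGame.add (IGame.add A C) B).opts,
        ∀ q, out K q → out K' q := by
      intro K hK
      rcases mem_opts_add.mp hK with ⟨W, hW, rfl⟩ | ⟨c, hc, rfl⟩
      · rcases mem_opts_add.mp hW with ⟨a, ha, rfl⟩ | ⟨b, hb, rfl⟩
        · have hsa := sizeOf_lt_of_mem ha
          exact ⟨_, mem_addL (mem_addL ha), fun q => ih a B C (by omega) q⟩
        · have hsb := sizeOf_lt_of_mem hb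
          exact ⟨_, mem_addR hb, fun q => ih A b C (by omega) q⟩
      · have hsc := sizeOf_lt_of_mem hc
        exact ⟨_, mem_addL (mem_addR hc), fun q => ih A B c (by omega) q⟩
    have key' : ∀ K' ∈ (IGame.add (IGame.add A C) B).opts, ∃ K ∈ (IGame.add (IGame.add A B) C).opts,
        ∀ q, out K q → out K' q := by
      intro K' hK'
      rcases mem_opts_add.mp hK' with ⟨W, hW, rfl⟩ | ⟨b, hb, rfl⟩
      · rcases mem_opts_add.mp hW with ⟨a, ha, rfl⟩ | ⟨c, hc, rfl⟩
        · have hsa := sizeOf_lt_of_mem ha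
          exact ⟨_, mem_addL (mem_addL ha), fun q => ih a B C (by omega) q⟩
        · have hsc := sizeOf_lt_of_mem hc
          exact ⟨_, mem_addR hc, fun q => ih A B c (by omega) q⟩
      · have hsb := sizeOf_lt_of_mem hb
        exact ⟨_, mem_addL (mem_addR hb), fun q => ih A b C (by omega) q⟩
    cases p with
    | N =>
      rw [out_N] at hp ⊢
      obtain ⟨K, hK, hPK⟩ := hp
      obtain ⟨K', hK', hout⟩ := key K hK
      exact ⟨K', hK', hout _ hPK⟩
    | O =>
      rw [out_O] at hp ⊢
      intro K' hK'
      obtain ⟨K, hK, hout⟩ := key' K' hK'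
      exact hout _ (hp _ hK)
    | P =>
      rw [out_P] at hp ⊢
      intro K' hK'
      obtain ⟨K, hK, hout⟩ := key' K' hK'
      exact hout _ (hp _ hK)

theorem swap23 {A B C : IGame} {p : Player} :
    out (IGame.add (IGame.add A B) C) p ↔ out (IGame.add (IGame.add A C) B) p :=
  ⟨swap23_aux (sizeOf A + sizeOf B + sizeOf C + 1) A B C (by omega) p,
   swap23_aux (sizeOf A + sizeOf C + sizeOf B + 1) A C B (by omega) p⟩

/-- swap the 1st and 3rd summand -/
theorem swap13_aux : ∀ n A B C, sizeOf A + sizeOf B + sizeOf C < n → ∀ p,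
    out (IGame.add (IGame.add A B) C) p → out (IGame.add (IGame.add C B) A) p := by
  intro n
  induction n with
  | zero => intro A B C h; omega
  | succ n ih =>
    intro A B C hn p hp
    have key : ∀ K ∈ (IGame.add (IGame.add A B) C).opts, ∃ K' ∈ (IGame.add (IGame.add C B) A).opts,
        ∀ q, out K q → out K' q := by
      intro K hK
      rcases mem_opts_add.mp hK with ⟨W, hW, rfl⟩ | ⟨c, hc, rfl⟩
      · rcases mem_opts_add.mp hW with ⟨a, ha, rfl⟩ | ⟨b, hb, rfl⟩
        · have hsa := sizeOf_lt_of_mem ha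
          exact ⟨_, mem_addR ha, fun q => ih a B C (by omega) q⟩
        · have hsb := sizeOf_lt_of_mem hb
          exact ⟨_, mem_addL (mem_addR hb), fun q => ih A b C (by omega) q⟩
      · have hsc := sizeOf_lt_of_mem hc
        exact ⟨_, mem_addL (mem_addL hc), fun q => ih A B c (by omega) q⟩
    have key' : ∀ K' ∈ (IGame.add (IGame.add C B) A).opts, ∃ K ∈ (IGame.add (IGame.add A B) C).opts,
        ∀ q, out K q → out K' q := by
      intro K' hK'
      rcases mem_opts_add.mp hK' with ⟨W, hW, rfl⟩ | ⟨a, ha, rfl⟩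
      · rcases mem_opts_add.mp hW with ⟨c, hc, rfl⟩ | ⟨b, hb, rfl⟩
        · have hsc := sizeOf_lt_of_mem hc
          exact ⟨_, mem_addR hc, fun q => ih A B c (by omega) q⟩
        · have hsb := sizeOf_lt_of_mem hb
          exact ⟨_, mem_addL (mem_addR hb), fun q => ih A b C (by omega) q⟩
      · have hsa := sizeOf_lt_of_mem ha
        exact ⟨_, mem_addL (mem_addL ha), fun q => ih a B C (by omega) q⟩
    cases p with
    | N =>
      rw [out_N] at hp ⊢
      obtain ⟨K, hK, hPK⟩ := hp
      obtain ⟨K', hK', hout⟩ := key K hK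
      exact ⟨K', hK', hout _ hPK⟩
    | O =>
      rw [out_O] at hp ⊢
      intro K' hK'
      obtain ⟨K, hK, hout⟩ := key' K' hK'
      exact hout _ (hp _ hK)
    | P =>
      rw [out_P] at hp ⊢
      intro K' hK'
      obtain ⟨K, hK, hout⟩ := key' K' hK'
      exact hout _ (hp _ hK)

theorem swap13 {A B C : IGame} {p : Player} :
    out (IGame.add (IGame.add A B) C) p ↔ out (IGame.add (IGame.add C B) A) p :=
  ⟨swap13_aux (sizeOf A + sizeOf B + sizeOf C + 1) A B C (by omega) p,
   swap13_aux (sizeOf C + sizeOf B + sizeOf A + 1) C B A (by omega) p⟩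

/-- no game is simultaneously N, O and P -/
theorem noNOP_aux : ∀ n G, sizeOf G < n → ¬(out G .N ∧ out G .O ∧ out G .P) := by
  intro n
  induction n with
  | zero => intro G h; omega
  | succ n ih =>
    rintro G hn ⟨hN, hO, hP⟩
    obtain ⟨g, hg, hPg⟩ := out_N.mp hN
    have hsg := sizeOf_lt_of_mem hg
    exact ih g (by omega) ⟨out_O.mp hO g hg, out_P.mp hP g hg, hPg⟩

theorem noNOP (G : IGame) : ¬(out G .N ∧ out G .O ∧ out G .P) :=
  noNOP_aux (sizeOf G + 1) G (by omega)

end Aux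

namespace Aux

def Und (G : IGame) : Prop := ¬out G .N ∧ ¬out G .O ∧ ¬out G .P

theorem und_no_P_opt {G : IGame} (h : Und G) : ∀ g ∈ G.opts, ¬out g .P := by
  have := h.1
  rw [out_N] at this
  push_neg at this
  exact this

theorem und_exists_nonN {G : IGame} (h : Und G) : ∃ g ∈ G.opts, ¬out g .N := by
  have := h.2.1
  rw [out_O] at this
  push_neg at this
  exact this

theorem und_exists_nonO {G : IGame} (h : Und G) : ∃ g ∈ G.opts, ¬out g .O := by
  have := h.2.2
  rw [out_P] at this
  push_neg at this
  exact this

theorem nonN_no_P_opt {G : IGame} (h : ¬out G .N) : ∀ g ∈ G.opts, ¬out g .P := by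
  rw [out_N] at h; push_neg at h; exact h

theorem nonO_exists_nonN {G : IGame} (h : ¬out G .O) : ∃ g ∈ G.opts, ¬out g .N := by
  rw [out_O] at h; push_neg at h; exact h

theorem nonP_exists_nonO {G : IGame} (h : ¬out G .P) : ∃ g ∈ G.opts, ¬out g .O := by
  rw [out_P] at h; push_neg at h; exact h

def Bd (A B : IGame) : Prop :=
  (out (IGame.add A B) .P → Und B → False) ∧
  (out (IGame.add A B) .O → Und A → out B .N ∧ out B .O ∧ ¬out B .P) ∧
  (out (IGame.add A B) .O → out A .N → out A .P → out B .N) ∧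
  (out (IGame.add A B) .P → ¬out B .P → out A .N) ∧
  (out (IGame.add A B) .P → ¬out B .N → out A .P) ∧
  (out (IGame.add A B) .O → ¬out B .N → out A .O) ∧
  (out (IGame.add A B) .N → ¬out B .N → out A .N) ∧
  (out (IGame.add A B) .P → out A .O → out A .P → out B .P) ∧
  (out (IGame.add A B) .P → out A .N → out A .O → out B .N) ∧
  (out (IGame.add A B) .O → out A .O → out A .P → out B .O) ∧
  (out (IGame.add A B) .N → out A .O → out A .P → out B .N) ∧
  (out (IGame.add A B) .N → Und A → out B .N)

theorem bundle : ∀ n A B, sizeOf A + sizeOf B < n → Bd A B := by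
  intro n
  induction n with
  | zero => intro A B h; omega
  | succ n IH =>
    intro A B hn
    -- components of the induction hypothesis, by name
    have ihc1 : ∀ X Y, sizeOf X + sizeOf Y < sizeOf A + sizeOf B →
        out (IGame.add X Y) .P → Und Y → False := fun X Y h => (IH X Y (by omega)).1
    have ihc2 : ∀ X Y, sizeOf X + sizeOf Y < sizeOf A + sizeOf B →
        out (IGame.add X Y) .O → Und X → out Y .N ∧ out Y .O ∧ ¬out Y .P :=
      fun X Y h => (IH X Y (by omega)).2.1
    have ihc4 : ∀ X Y, sizeOf X + sizeOf Y < sizeOf A + sizeOf B →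
        out (IGame.add X Y) .O → out X .N → out X .P → out Y .N :=
      fun X Y h => (IH X Y (by omega)).2.2.1
    have ihc5 : ∀ X Y, sizeOf X + sizeOf Y < sizeOf A + sizeOf B →
        out (IGame.add X Y) .P → ¬out Y .P → out X .N :=
      fun X Y h => (IH X Y (by omega)).2.2.2.1
    have ihc5' : ∀ X Y, sizeOf X + sizeOf Y < sizeOf A + sizeOf B →
        out (IGame.add X Y) .P → ¬out Y .N → out X .P :=
      fun X Y h => (IH X Y (by omega)).2.2.2.2.1
    have ihc6 : ∀ X Y, sizeOf X + sizeOf Y < sizeOf A + sizeOf B →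
        out (IGame.add X Y) .O → ¬out Y .N → out X .O :=
      fun X Y h => (IH X Y (by omega)).2.2.2.2.2.1
    have ihc7 : ∀ X Y, sizeOf X + sizeOf Y < sizeOf A + sizeOf B →
        out (IGame.add X Y) .N → ¬out Y .N → out X .N :=
      fun X Y h => (IH X Y (by omega)).2.2.2.2.2.2.1
    have ihc8 : ∀ X Y, sizeOf X + sizeOf Y < sizeOf A + sizeOf B →
        out (IGame.add X Y) .P → out X .O → out X .P → out Y .P :=
      fun X Y h => (IH X Y (by omega)).2.2.2.2.2.2.2.1
    have ihc9 : ∀ X Y, sizeOf X + sizeOf Y < sizeOf A + sizeOf B →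
        out (IGame.add X Y) .P → out X .N → out X .O → out Y .N :=
      fun X Y h => (IH X Y (by omega)).2.2.2.2.2.2.2.2.1
    have ihc10 : ∀ X Y, sizeOf X + sizeOf Y < sizeOf A + sizeOf B →
        out (IGame.add X Y) .O → out X .O → out X .P → out Y .O :=
      fun X Y h => (IH X Y (by omega)).2.2.2.2.2.2.2.2.2.1
    have ihc11 : ∀ X Y, sizeOf X + sizeOf Y < sizeOf A + sizeOf B →
        out (IGame.add X Y) .N → out X .O → out X .P → out Y .N :=
      fun X Y h => (IH X Y (by omega)).2.2.2.2.2.2.2.2.2.2.1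
    have ihc14 : ∀ X Y, sizeOf X + sizeOf Y < sizeOf A + sizeOf B →
        out (IGame.add X Y) .N → Und X → out Y .N :=
      fun X Y h => (IH X Y (by omega)).2.2.2.2.2.2.2.2.2.2.2
    clear IH hn
    -- c5 : P(A+B) ∧ ¬P(B) ⇒ N(A)
    have c5 : out (IGame.add A B) .P → ¬out B .P → out A .N := by
      intro hP hnPB
      obtain ⟨b₁, hb₁, hnOb₁⟩ := nonP_exists_nonO hnPB
      have hsb₁ := sizeOf_lt_of_mem hb₁
      have hO1 : out (IGame.add A b₁) .O := out_P.mp hP _ (mem_addR hb₁)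
      obtain ⟨b₂, hb₂, hnNb₂⟩ := nonO_exists_nonN hnOb₁
      have hsb₂ := sizeOf_lt_of_mem hb₂
      have hN2 : out (IGame.add A b₂) .N := out_O.mp hO1 _ (mem_addR hb₂)
      obtain ⟨K, hK, hPK⟩ := out_N.mp hN2
      rcases mem_opts_add.mp hK with ⟨a, ha, rfl⟩ | ⟨b₃, hb₃, rfl⟩
      · have hsa := sizeOf_lt_of_mem ha
        exact out_N.mpr ⟨a, ha, ihc5' a b₂ (by omega) hPK hnNb₂⟩
      · have hsb₃ := sizeOf_lt_of_mem hb₃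
        exact ihc5 A b₃ (by omega) hPK (nonN_no_P_opt hnNb₂ _ hb₃)
    -- c5' : P(A+B) ∧ ¬N(B) ⇒ P(A)
    have c5' : out (IGame.add A B) .P → ¬out B .N → out A .P := by
      intro hP hnNB
      rw [out_P]
      intro a ha
      have hsa := sizeOf_lt_of_mem ha
      exact ihc6 a B (by omega) (out_P.mp hP _ (mem_addL ha)) hnNB
    -- c6 : O(A+B) ∧ ¬N(B) ⇒ O(A)
    have c6 : out (IGame.add A B) .O → ¬out B .N → out A .O := by
      intro hO hnNB
      rw [out_O]
      intro a ha
      have hsa := sizeOf_lt_of_mem ha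
      exact ihc7 a B (by omega) (out_O.mp hO _ (mem_addL ha)) hnNB
    -- c7 : N(A+B) ∧ ¬N(B) ⇒ N(A)
    have c7 : out (IGame.add A B) .N → ¬out B .N → out A .N := by
      intro hN hnNB
      obtain ⟨K, hK, hPK⟩ := out_N.mp hN
      rcases mem_opts_add.mp hK with ⟨a, ha, rfl⟩ | ⟨b, hb, rfl⟩
      · have hsa := sizeOf_lt_of_mem ha
        exact out_N.mpr ⟨a, ha, ihc5' a B (by omega) hPK hnNB⟩
      · have hsb := sizeOf_lt_of_mem hb
        exact ihc5 A b (by omega) hPK (nonN_no_P_opt hnNB _ hb)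
    -- c8 : P(A+B) ∧ O(A) ∧ P(A) ⇒ P(B)
    have c8 : out (IGame.add A B) .P → out A .O → out A .P → out B .P := by
      intro hP hOA hPA
      rw [out_P]
      intro b hb
      have hsb := sizeOf_lt_of_mem hb
      exact ihc10 A b (by omega) (out_P.mp hP _ (mem_addR hb)) hOA hPA
    -- c10 : O(A+B) ∧ O(A) ∧ P(A) ⇒ O(B)
    have c10 : out (IGame.add A B) .O → out A .O → out A .P → out B .O := by
      intro hO hOA hPA
      rw [out_O]
      intro b hb
      have hsb := sizeOf_lt_of_mem hb
      exact ihc11 A b (by omega) (out_O.mp hO _ (mem_addR hb)) hOA hPA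
    -- c9 : P(A+B) ∧ N(A) ∧ O(A) ⇒ N(B)
    have c9 : out (IGame.add A B) .P → out A .N → out A .O → out B .N := by
      intro hP hNA hOA
      obtain ⟨a₁, ha₁, hPa₁⟩ := out_N.mp hNA
      have hsa₁ := sizeOf_lt_of_mem ha₁
      have hNa₁ : out a₁ .N := out_O.mp hOA _ ha₁
      exact ihc4 a₁ B (by omega) (out_P.mp hP _ (mem_addL ha₁)) hNa₁ hPa₁
    -- c11 : N(A+B) ∧ O(A) ∧ P(A) ⇒ N(B)
    have c11 : out (IGame.add A B) .N → out A .O → out A .P → out B .N := by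
      intro hN hOA hPA
      obtain ⟨K, hK, hPK⟩ := out_N.mp hN
      rcases mem_opts_add.mp hK with ⟨a, ha, rfl⟩ | ⟨b, hb, rfl⟩
      · have hsa := sizeOf_lt_of_mem ha
        exact ihc9 a B (by omega) hPK (out_O.mp hOA _ ha) (out_P.mp hPA _ ha)
      · have hsb := sizeOf_lt_of_mem hb
        exact out_N.mpr ⟨b, hb, ihc8 A b (by omega) hPK hOA hPA⟩
    -- c4 : O(A+B) ∧ N(A) ∧ P(A) ⇒ N(B)
    have c4 : out (IGame.add A B) .O → out A .N → out A .P → out B .N := by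
      intro hO hNA hPA
      obtain ⟨a₁, ha₁, hPa₁⟩ := out_N.mp hNA
      have hsa₁ := sizeOf_lt_of_mem ha₁
      have hOa₁ : out a₁ .O := out_P.mp hPA _ ha₁
      have hN1 : out (IGame.add a₁ B) .N := out_O.mp hO _ (mem_addL ha₁)
      obtain ⟨K, hK, hPK⟩ := out_N.mp hN1
      rcases mem_opts_add.mp hK with ⟨a₂, ha₂, rfl⟩ | ⟨b, hb, rfl⟩
      · have hsa₂ := sizeOf_lt_of_mem ha₂
        exact ihc9 a₂ B (by omega) hPK (out_O.mp hOa₁ _ ha₂) (out_P.mp hPa₁ _ ha₂)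
      · have hsb := sizeOf_lt_of_mem hb
        exact out_N.mpr ⟨b, hb, ihc8 a₁ b (by omega) hPK hOa₁ hPa₁⟩
    -- c14 : N(A+B) ∧ Und(A) ⇒ N(B)
    have c14 : out (IGame.add A B) .N → Und A → out B .N := by
      intro hN hUA
      obtain ⟨K, hK, hPK⟩ := out_N.mp hN
      rcases mem_opts_add.mp hK with ⟨a, ha, rfl⟩ | ⟨b, hb, rfl⟩
      · have hsa := sizeOf_lt_of_mem ha
        exact ihc5 B a (by omega) (out_comm.mp hPK) (und_no_P_opt hUA _ ha)
      · have hsb := sizeOf_lt_of_mem hb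
        exact absurd hUA (fun hUA => ihc1 b A (by omega) (out_comm.mp hPK) hUA)
    -- c2 : O(A+B) ∧ Und(A) ⇒ N(B) ∧ O(B) ∧ ¬P(B)
    have c2 : out (IGame.add A B) .O → Und A → out B .N ∧ out B .O ∧ ¬out B .P := by
      intro hO hUA
      obtain ⟨a₀, ha₀, hnNa₀⟩ := und_exists_nonN hUA
      have hsa₀ := sizeOf_lt_of_mem ha₀
      have hNB : out B .N := by
        have hN0 : out (IGame.add a₀ B) .N := out_O.mp hO _ (mem_addL ha₀)
        obtain ⟨K, hK, hPK⟩ := out_N.mp hN0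
        rcases mem_opts_add.mp hK with ⟨a₀', ha₀', rfl⟩ | ⟨b, hb, rfl⟩
        · have hsa₀' := sizeOf_lt_of_mem ha₀'
          exact ihc5 B a₀' (by omega) (out_comm.mp hPK) (nonN_no_P_opt hnNa₀ _ ha₀')
        · have hsb := sizeOf_lt_of_mem hb
          exact out_N.mpr ⟨b, hb, ihc5' b a₀ (by omega) (out_comm.mp hPK) hnNa₀⟩
      have hOB : out B .O := by
        rw [out_O]
        intro b hb
        have hsb := sizeOf_lt_of_mem hb
        exact ihc14 A b (by omega) (out_O.mp hO _ (mem_addR hb)) hUA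
      exact ⟨hNB, hOB, fun hPB => noNOP B ⟨hNB, hOB, hPB⟩⟩
    -- c1 : P(A+B) ∧ Und(B) ⇒ False
    have c1 : out (IGame.add A B) .P → Und B → False := by
      intro hP hUB
      obtain ⟨b₁, hb₁, hnOb₁⟩ := und_exists_nonO hUB
      have hsb₁ := sizeOf_lt_of_mem hb₁
      have hO1 : out (IGame.add A b₁) .O := out_P.mp hP _ (mem_addR hb₁)
      obtain ⟨b₂, hb₂, hnNb₂⟩ := nonO_exists_nonN hnOb₁
      have hsb₂ := sizeOf_lt_of_mem hb₂
      have hN2 : out (IGame.add A b₂) .N := out_O.mp hO1 _ (mem_addR hb₂)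
      obtain ⟨K, hK, hPK⟩ := out_N.mp hN2
      rcases mem_opts_add.mp hK with ⟨a, ha, rfl⟩ | ⟨b₃, hb₃, rfl⟩
      · have hsa := sizeOf_lt_of_mem ha
        have hOaB : out (IGame.add B a) .O := out_comm.mp (out_P.mp hP _ (mem_addL ha))
        obtain ⟨hNa, hOa, _⟩ := ihc2 B a (by omega) hOaB hUB
        obtain ⟨a₁, ha₁, hPa₁⟩ := out_N.mp hNa
        have hsa₁ := sizeOf_lt_of_mem ha₁
        have hNa₁ : out a₁ .N := out_O.mp hOa _ ha₁
        have hO12 : out (IGame.add a₁ b₂) .O := out_P.mp hPK _ (mem_addL ha₁)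
        exact hnNb₂ (ihc4 a₁ b₂ (by omega) hO12 hNa₁ hPa₁)
      · have hsb₃ := sizeOf_lt_of_mem hb₃
        have hNA : out A .N := ihc5 A b₃ (by omega) hPK (nonN_no_P_opt hnNb₂ _ hb₃)
        obtain ⟨astar, hastar, hPastar⟩ := out_N.mp hNA
        have hsastar := sizeOf_lt_of_mem hastar
        have hOaB : out (IGame.add B astar) .O := out_comm.mp (out_P.mp hP _ (mem_addL hastar))
        exact (ihc2 B astar (by omega) hOaB hUB).2.2 hPastar
    exact ⟨c1, c2, c4, c5, c5', c6, c7, c8, c9, c10, c11, c14⟩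

end Aux

namespace Aux

theorem L_c1 (A B : IGame) : out (IGame.add A B) .P → Und B → False :=
  (bundle (sizeOf A + sizeOf B + 1) A B (by omega)).1

theorem L_c7 (A B : IGame) : out (IGame.add A B) .N → ¬out B .N → out A .N :=
  (bundle (sizeOf A + sizeOf B + 1) A B (by omega)).2.2.2.2.2.2.1

theorem L_c14 (A B : IGame) : out (IGame.add A B) .N → Und A → out B .N :=
  (bundle (sizeOf A + sizeOf B + 1) A B (by omega)).2.2.2.2.2.2.2.2.2.2.2

end Aux

open IGame Aux in
theorem triple_undetermined_options' (G H J : IGame)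
    (hG : IGame.outcome G = ∅) (hH : IGame.outcome H = ∅)
    (hJ : IGame.outcome J = ∅) :
    ∀ K ∈ (IGame.add (IGame.add G H) J).opts, IGame.outcome K = ∅ := by
  have hG' : ∀ p, ¬ out G p := by
    intro p hp
    have h2 : p ∈ IGame.outcome G := hp
    rw [hG] at h2
    exact h2
  have hH' : ∀ p, ¬ out H p := by
    intro p hp
    have h2 : p ∈ IGame.outcome H := hp
    rw [hH] at h2
    exact h2
  have hJ' : ∀ p, ¬ out J p := by
    intro p hp
    have h2 : p ∈ IGame.outcome J := hp
    rw [hJ] at h2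
    exact h2
  have undG : Und G := ⟨hG' _, hG' _, hG' _⟩
  have undH : Und H := ⟨hH' _, hH' _, hH' _⟩
  have undJ : Und J := ⟨hJ' _, hJ' _, hJ' _⟩
  have noPund : ∀ X Y : IGame, Und Y → ¬ out (IGame.add X Y) .P :=
    fun X Y u hP => L_c1 X Y hP u
  -- no option of (X+H)+J is a P-position, hence (X+H)+J is not N
  have MN1 : ∀ X : IGame, ¬ out (IGame.add (IGame.add X H) J) .N := by
    intro X hN
    obtain ⟨K, hK, hPK⟩ := out_N.mp hN
    rcases mem_opts_add.mp hK with ⟨W, hW, rfl⟩ | ⟨j, hj, rfl⟩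
    · exact noPund W J undJ hPK
    · exact noPund (IGame.add X j) H undH (swap23.mp hPK)
  have MN2 : ∀ Y : IGame, ¬ out (IGame.add (IGame.add G Y) J) .N := by
    intro Y hN
    obtain ⟨K, hK, hPK⟩ := out_N.mp hN
    rcases mem_opts_add.mp hK with ⟨W, hW, rfl⟩ | ⟨j, hj, rfl⟩
    · exact noPund W J undJ hPK
    · exact noPund (IGame.add j Y) G undG (swap13.mp hPK)
  have MN3 : ∀ Y : IGame, ¬ out (IGame.add (IGame.add G H) Y) .N := by
    intro Y hN
    obtain ⟨K, hK, hPK⟩ := out_N.mp hN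
    rcases mem_opts_add.mp hK with ⟨W, hW, rfl⟩ | ⟨y, hy, rfl⟩
    · rcases mem_opts_add.mp hW with ⟨g, hg, rfl⟩ | ⟨h, hh, rfl⟩
      · exact noPund (IGame.add g Y) H undH (swap23.mp hPK)
      · exact noPund (IGame.add Y h) G undG (swap13.mp hPK)
    · exact noPund (IGame.add G y) H undH (swap23.mp hPK)
  intro K hK
  rw [Set.eq_empty_iff_forall_notMem]
  intro p hpmem
  rcases mem_opts_add.mp hK with ⟨W, hW, rfl⟩ | ⟨j, hj, rfl⟩
  · rcases mem_opts_add.mp hW with ⟨g, hg, rfl⟩ | ⟨h, hh, rfl⟩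
    · -- K = (g+H)+J
      have hp : out (IGame.add (IGame.add g H) J) p := hpmem
      cases p with
      | N => exact MN1 g hp
      | P => exact noPund _ J undJ hp
      | O =>
        obtain ⟨h₀, hh₀, hnNh₀⟩ := und_exists_nonN undH
        have hN1 : out (IGame.add (IGame.add g h₀) J) .N :=
          out_O.mp hp _ (mem_addL (mem_addR hh₀))
        have hN3 : out (IGame.add g h₀) .N := L_c14 J _ (out_comm.mp hN1) undJ
        have hNg : out g .N := L_c7 g h₀ hN3 hnNh₀
        obtain ⟨g₁, hg₁, _⟩ := out_N.mp hNg
        exact MN1 g₁ (out_O.mp hp _ (mem_addL (mem_addL hg₁)))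
    · -- K = (G+h)+J
      have hp : out (IGame.add (IGame.add G h) J) p := hpmem
      cases p with
      | N => exact MN2 h hp
      | P => exact noPund _ J undJ hp
      | O =>
        obtain ⟨j₀, hj₀, hnNj₀⟩ := und_exists_nonN undJ
        have hN1 : out (IGame.add (IGame.add G h) j₀) .N := out_O.mp hp _ (mem_addR hj₀)
        have hN2 : out (IGame.add (IGame.add j₀ h) G) .N := swap13.mp hN1
        have hN4 : out (IGame.add j₀ h) .N := L_c14 G _ (out_comm.mp hN2) undG
        have hNh : out h .N := L_c7 h j₀ (out_comm.mp hN4) hnNj₀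
        obtain ⟨h₁, hh₁, _⟩ := out_N.mp hNh
        exact MN2 h₁ (out_O.mp hp _ (mem_addL (mem_addR hh₁)))
  · -- K = (G+H)+j
    have hp : out (IGame.add (IGame.add G H) j) p := hpmem
    cases p with
    | N => exact MN3 j hp
    | P => exact noPund _ H undH (swap23.mp hp)
    | O =>
      obtain ⟨h₀, hh₀, hnNh₀⟩ := und_exists_nonN undH
      have hN1 : out (IGame.add (IGame.add G h₀) j) .N :=
        out_O.mp hp _ (mem_addL (mem_addR hh₀))
      have hN2 : out (IGame.add (IGame.add j h₀) G) .N := swap13.mp hN1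
      have hN4 : out (IGame.add j h₀) .N := L_c14 G _ (out_comm.mp hN2) undG
      have hNj : out j .N := L_c7 j h₀ hN4 hnNh₀
      obtain ⟨j₁, hj₁, _⟩ := out_N.mp hNj
      exact MN3 j₁ (out_O.mp hp _ (mem_addR hj₁))

open IGame in
/-- If `G`, `H`, `J` are undetermined, then every option of `G+H+J` is
undetermined. -/
theorem triple_undetermined_options (G H J : IGame)
    (hG : IGame.outcome G = ∅) (hH : IGame.outcome H = ∅)
    (hJ : IGame.outcome J = ∅) :
    ∀ K ∈ (IGame.add (IGame.add G H) J).opts, IGame.outcome K = ∅ := by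
  exact triple_undetermined_options' G H J hG hH hJ
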